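/- Let M be a finite matroid with rank function r and closure operator cl, and let X and Y be cyclic flats of M. Let W be the union of all circuits of M contained in X ∩ Y. Then r(X) + r(Y) ≥ r(cl(X ∪ Y)) + r(W) + |(X ∩ Y) \ W|. -/

import Mathlib

namespace Matroid

variable {α β : Type*}

/-- A circuit of a matroid: a minimal dependent set. -/
def IsCircuit' (M : Matroid α) (C : Set α) : Prop :=
  M.Dep C ∧ ∀ D, D ⊂ C → M.Indep D

/-- A cyclic flat: a flat that is a (possibly empty) union of circuits. -/
def CyclicFlat (M : Matroid α) (X : Set α) : Prop :=
  M.IsFlat X ∧ ∀ e ∈ X, ∃ C, M.IsCircuit' C ∧ C ⊆ X ∧ e ∈ C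

/-- The rank of a set: the maximum size of an independent subset. -/
noncomputable def rk (M : Matroid α) (X : Set α) : ℕ :=
  sSup {n | ∃ I, M.Indep I ∧ I ⊆ X ∧ I.ncard = n}

/-- Deletion of a set from a matroid. -/
def del (M : Matroid α) (D : Set α) : Matroid α := M ↾ (M.E \ D)

/-- Contraction of a set in a matroid. -/
def con (M : Matroid α) (C : Set α) : Matroid α := (M✶ ↾ (M.E \ C))✶

/-- `N` is a minor of `M` if it is obtained from `M` by a contraction and a deletion. -/
def IsMinorOf (N M : Matroid α) : Prop := ∃ C D, N = (M.con C).del D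

/-- Matroid isomorphism: a bijection of ground sets preserving independence. -/
def IsIsoTo (M : Matroid α) (N : Matroid β) : Prop :=
  ∃ e : M.E ≃ N.E, ∀ I : Set M.E,
    M.Indep (Subtype.val '' I) ↔ N.Indep (Subtype.val '' (e '' I))

end Matroid

/-!
By submodularity, `r X + r Y ≥ r (X ∪ Y) + r (X ∩ Y)`, and `r (X ∪ Y) = r (cl (X ∪ Y))`.
Every element of `(X ∩ Y) \ W` is a coloop of `M ∣ (X ∩ Y)`: a circuit through it would lie in
`X ∩ Y`, hence in `W`. So a basis of `W` together with `(X ∩ Y) \ W` is independent, which gives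
`r (X ∩ Y) ≥ r W + |(X ∩ Y) \ W|`.
-/

namespace Matroid

variable {α : Type*} {M : Matroid α} {C I S : Set α}

lemma isCircuit'_iff_isCircuit : M.IsCircuit' C ↔ M.IsCircuit C :=
  isCircuit_iff_forall_ssubset.symm

def cyclicPart (M : Matroid α) (S : Set α) : Set α :=
  ⋃₀ {C | M.IsCircuit' C ∧ C ⊆ S}

lemma cyclicPart_subset (M : Matroid α) (S : Set α) : M.cyclicPart S ⊆ S :=
  Set.sUnion_subset fun _ hC ↦ hC.2

lemma IsCircuit.subset_cyclicPart (hC : M.IsCircuit C) (hCS : C ⊆ S) : C ⊆ M.cyclicPart S :=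
  Set.subset_sUnion_of_mem ⟨isCircuit'_iff_isCircuit.2 hC, hCS⟩

lemma Indep.union_diff_cyclicPart (hI : M.Indep I) (hIS : I ⊆ M.cyclicPart S)
    (hS : S ⊆ M.E) : M.Indep (I ∪ (S \ M.cyclicPart S)) := by
  have hsub : I ∪ (S \ M.cyclicPart S) ⊆ S :=
    Set.union_subset (hIS.trans (M.cyclicPart_subset S)) Set.sdiff_subset
  by_contra hdep
  obtain ⟨C, hCsub, hC⟩ := ((not_indep_iff (hsub.trans hS)).1 hdep).exists_isCircuit_subset
  have hCcyc : C ⊆ M.cyclicPart S := hC.subset_cyclicPart (hCsub.trans hsub)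
  have hCI : C ⊆ I := fun e he ↦ (hCsub he).resolve_right fun h ↦ h.2 (hCcyc he)
  exact hC.not_indep (hI.subset hCI)

lemma eRk_cyclicPart_add_encard_diff_le (hS : S ⊆ M.E) :
    M.eRk (M.cyclicPart S) + (S \ M.cyclicPart S).encard ≤ M.eRk S := by
  obtain ⟨I, hI⟩ := M.exists_isBasis' (M.cyclicPart S)
  have hdisj : Disjoint I (S \ M.cyclicPart S) :=
    Set.disjoint_left.2 fun _ he hdiff ↦ hdiff.2 (hI.subset he)
  calc M.eRk (M.cyclicPart S) + (S \ M.cyclicPart S).encard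
      = (I ∪ (S \ M.cyclicPart S)).encard := by
        rw [Set.encard_union_eq hdisj, hI.encard_eq_eRk]
    _ ≤ M.eRk S := (hI.indep.union_diff_cyclicPart hI.subset hS).encard_le_eRk_of_subset
        (Set.union_subset (hI.subset.trans (M.cyclicPart_subset S)) Set.sdiff_subset)

lemma cast_rk_eq_eRk [M.Finite] (X : Set α) : (M.rk X : ℕ∞) = M.eRk X := by
  obtain ⟨I, hI⟩ := M.exists_isBasis' X
  have hIcard : (I.ncard : ℕ∞) = M.eRk X := by
    rw [(M.set_finite I hI.indep.subset_ground).cast_ncard_eq, hI.encard_eq_eRk]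
  suffices hmax : IsGreatest {n | ∃ J, M.Indep J ∧ J ⊆ X ∧ J.ncard = n} I.ncard by
    rw [rk, hmax.csSup_eq, hIcard]
  refine ⟨⟨I, hI.indep, hI.subset, rfl⟩, ?_⟩
  rintro _ ⟨J, hJ, hJX, rfl⟩
  rw [← Nat.cast_le (α := ℕ∞), hIcard, (M.set_finite J hJ.subset_ground).cast_ncard_eq]
  exact hJ.encard_le_eRk_of_subset hJX

end Matroid

open Matroid in
theorem cyclicFlat_submodular_general {α : Type*} (M : Matroid α) [M.Finite]
    (X Y : Set α) (hX : M.CyclicFlat X) :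
    M.rk (M.closure (X ∪ Y)) + M.rk (⋃₀ {C | M.IsCircuit' C ∧ C ⊆ X ∩ Y}) +
        ((X ∩ Y) \ ⋃₀ {C | M.IsCircuit' C ∧ C ⊆ X ∩ Y}).ncard
      ≤ M.rk X + M.rk Y := by
  have hXY : X ∩ Y ⊆ M.E := Set.inter_subset_left.trans hX.1.subset_ground
  have hfin : ((X ∩ Y) \ M.cyclicPart (X ∩ Y)).Finite :=
    M.set_finite _ (Set.sdiff_subset.trans hXY)
  change M.rk _ + M.rk (M.cyclicPart (X ∩ Y)) + ((X ∩ Y) \ M.cyclicPart (X ∩ Y)).ncard ≤ _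
  rw [← Nat.cast_le (α := ℕ∞)]
  push_cast
  simp only [cast_rk_eq_eRk, eRk_closure_eq, hfin.cast_ncard_eq]
  calc M.eRk (X ∪ Y) + M.eRk (M.cyclicPart (X ∩ Y)) +
        ((X ∩ Y) \ M.cyclicPart (X ∩ Y)).encard
      ≤ M.eRk (X ∪ Y) + M.eRk (X ∩ Y) := by
        rw [add_assoc]
        exact add_le_add_right (eRk_cyclicPart_add_encard_diff_le hXY) _
    _ ≤ M.eRk X + M.eRk Y := by
        rw [add_comm]
        exact M.eRk_inter_add_eRk_union_le X Y

/-- For cyclic flats `X` and `Y` of a finite matroid `M`, with `W` the union of all circuits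
contained in `X ∩ Y`, we have `r X + r Y ≥ r (cl (X ∪ Y)) + r W + |(X ∩ Y) \ W|`. -/
theorem cyclicFlat_submodular {α : Type*} (M : Matroid α) [M.Finite]
    (X Y : Set α) (hX : M.CyclicFlat X) (hY : M.CyclicFlat Y) :
    M.rk (M.closure (X ∪ Y)) + M.rk (⋃₀ {C | M.IsCircuit' C ∧ C ⊆ X ∩ Y}) +
        ((X ∩ Y) \ ⋃₀ {C | M.IsCircuit' C ∧ C ⊆ X ∩ Y}).ncard
      ≤ M.rk X + M.rk Y :=
  cyclicFlat_submodular_general M X Y hX
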